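/- arXiv:math/0104280 — 4 statements merged into one kernel-verified Lean document; each statement's English description precedes it below -/
import Mathlib

section
/- For the function F(x) = x·cos²(x/2) − sin(x), there holds |F(x)| ≤ (1/12)(2π + 1)|x|³ for all real x with |x| ≤ 2π. -/
open Real

/-! Since `x cos²(x/2) = x (1 + cos x) / 2`, one has `F(x) = (x - sin x) - x (1 - cos x) / 2`, and the
two standard bounds `|x - sin x| ≤ |x|³/6` and `0 ≤ 1 - cos x ≤ x²/2` give `|F(x)| ≤ (5/12)|x|³` for
every real `x`; the claim follows from `5 ≤ 2π + 1`. -/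

lemma mul_cos_half_sq_sub_sin (x : ℝ) :
    x * cos (x / 2) ^ 2 - sin x = (x - sin x) - x * (1 - cos x) / 2 := by
  rw [cos_sq, mul_div_cancel₀ x two_ne_zero]
  ring

lemma abs_mul_one_sub_cos_le (x : ℝ) : |x * (1 - cos x)| ≤ |x| ^ 3 / 2 := by
  have h_nonneg : 0 ≤ 1 - cos x := sub_nonneg.mpr (cos_le_one x)
  have h_le : 1 - cos x ≤ |x| ^ 2 / 2 := by
    rw [sq_abs]
    linarith [one_sub_sq_div_two_le_cos (x := x)]
  calc |x * (1 - cos x)| = |x| * (1 - cos x) := by rw [abs_mul, abs_of_nonneg h_nonneg]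
    _ ≤ |x| * (|x| ^ 2 / 2) := by gcongr
    _ = |x| ^ 3 / 2 := by ring

lemma abs_mul_cos_half_sq_sub_sin_le (x : ℝ) :
    |x * cos (x / 2) ^ 2 - sin x| ≤ 5 / 12 * |x| ^ 3 := by
  rw [mul_cos_half_sq_sub_sin]
  calc |(x - sin x) - x * (1 - cos x) / 2|
      ≤ |x - sin x| + |x * (1 - cos x)| / 2 := by
        rw [← abs_two, ← abs_div, abs_two]
        exact abs_sub _ _
    _ ≤ |x| ^ 3 / 6 + |x| ^ 3 / 2 / 2 := by
        gcongr
        exacts [abs_sub_sin_le x, abs_mul_one_sub_cos_le x]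
    _ = 5 / 12 * |x| ^ 3 := by ring

theorem abs_F_le_general (x : ℝ) :
    |x * Real.cos (x / 2) ^ 2 - Real.sin x| ≤
      (1 / 12) * (2 * Real.pi + 1) * |x| ^ 3 := by
  calc |x * cos (x / 2) ^ 2 - sin x| ≤ 5 / 12 * |x| ^ 3 := abs_mul_cos_half_sq_sub_sin_le x
    _ ≤ (1 / 12) * (2 * π + 1) * |x| ^ 3 := by
        gcongr
        linarith [pi_gt_three]

/-- For `F(x) = x·cos²(x/2) − sin x`, one has
`|F(x)| ≤ (1/12)(2π + 1)|x|³` for all real `x` with `|x| ≤ 2π`. -/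
theorem abs_F_le (x : ℝ) (hx : |x| ≤ 2 * Real.pi) :
    |x * Real.cos (x / 2) ^ 2 - Real.sin x| ≤
      (1 / 12) * (2 * Real.pi + 1) * |x| ^ 3 :=
  abs_F_le_general x
end

section
/- For the function Φ(x) = (x/2)·sin(x) − 2·sin²(x/2), there holds |Φ(x)| ≤ (1/24)(π + 1)|x|⁴ for all real x with |x| ≤ π. -/
/-!
Writing `2 sin²(x/2) = 1 - cos x`, the function is `Φ(x) = (x/2) sin x + cos x - 1`, which is even, satisfies
`Φ(0) = Φ'(0) = 0` and has `Φ''(x) = -(x/2) sin x`. Since `|sin t| ≤ |t|`, this gives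
`|Φ''(t)| ≤ t²/2`, and integrating twice from `0` yields `|Φ(x)| ≤ x⁴/24` for every real `x`.
-/

open Real

theorem norm_le_of_norm_deriv_le_pow {E : Type*} [NormedAddCommGroup E] [NormedSpace ℝ E]
    {f f' : ℝ → E} {c : ℝ} {n : ℕ} (hf : ∀ t, HasDerivAt f (f' t) t) (hf0 : f 0 = 0)
    (hbound : ∀ t, 0 ≤ t → ‖f' t‖ ≤ c * t ^ n) {x : ℝ} (hx : 0 ≤ x) :
    ‖f x‖ ≤ c * x ^ (n + 1) / (n + 1) := by
  have hB (t : ℝ) : HasDerivAt (fun t => c * t ^ (n + 1) / (n + 1)) (c * t ^ n) t := by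
    refine (((hasDerivAt_pow (n + 1) t).const_mul c).div_const ((n : ℝ) + 1)).congr_deriv ?_
    rw [Nat.add_sub_cancel]
    push_cast
    field_simp
  refine image_norm_le_of_norm_deriv_right_le_deriv_boundary
    (fun t _ => (hf t).continuousAt.continuousWithinAt) (fun t _ => (hf t).hasDerivWithinAt)
    (by simp [hf0]) hB (fun t ht => hbound t ht.1) ⟨hx, le_rfl⟩

noncomputable def Phi (x : ℝ) : ℝ := x / 2 * sin x - 2 * sin (x / 2) ^ 2

theorem Phi_eq (x : ℝ) : Phi x = x / 2 * sin x + cos x - 1 := by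
  rw [Phi, sin_sq_eq_half_sub, show 2 * (x / 2) = x by ring]
  ring

theorem Phi_neg (x : ℝ) : Phi (-x) = Phi x := by
  simp only [Phi_eq, sin_neg, cos_neg]
  ring

theorem hasDerivAt_Phi (x : ℝ) : HasDerivAt Phi (x / 2 * cos x - sin x / 2) x := by
  rw [show Phi = fun t => t / 2 * sin t + cos t - 1 from funext Phi_eq]
  refine ((((hasDerivAt_id x).div_const 2).mul (hasDerivAt_sin x)).add
    (hasDerivAt_cos x)).sub_const 1 |>.congr_deriv ?_
  simp only [id_eq]
  ring

theorem hasDerivAt_deriv_Phi (x : ℝ) :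
    HasDerivAt (fun t => t / 2 * cos t - sin t / 2) (-(x / 2 * sin x)) x := by
  refine (((hasDerivAt_id x).div_const 2).mul (hasDerivAt_cos x)).sub
    ((hasDerivAt_sin x).div_const 2) |>.congr_deriv ?_
  simp only [id_eq]
  ring

theorem abs_Phi_le_of_nonneg {x : ℝ} (hx : 0 ≤ x) : |Phi x| ≤ x ^ 4 / 24 := by
  have hPhi'' (t : ℝ) (ht : 0 ≤ t) : |-(t / 2 * sin t)| ≤ 1 / 2 * t ^ 2 := by
    rw [abs_neg, abs_mul, abs_of_nonneg (by positivity : 0 ≤ t / 2)]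
    nlinarith [abs_sin_le_abs (x := t), abs_of_nonneg ht]
  have hPhi' (t : ℝ) (ht : 0 ≤ t) : |t / 2 * cos t - sin t / 2| ≤ 1 / 6 * t ^ 3 := by
    convert norm_le_of_norm_deriv_le_pow hasDerivAt_deriv_Phi (by simp) hPhi'' ht using 1
    · rfl
    · push_cast; ring
  convert norm_le_of_norm_deriv_le_pow hasDerivAt_Phi (by simp [Phi]) hPhi' hx using 1
  · rfl
  · push_cast; ring

theorem abs_Phi_le_pow_four (x : ℝ) : |Phi x| ≤ x ^ 4 / 24 := by
  rcases le_total 0 x with hx | hx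
  · exact abs_Phi_le_of_nonneg hx
  · simpa [Phi_neg, Even.neg_pow (by decide : Even 4)] using abs_Phi_le_of_nonneg (neg_nonneg.2 hx)

theorem abs_Phi_le_general (x : ℝ) :
    |x / 2 * Real.sin x - 2 * Real.sin (x / 2) ^ 2| ≤
      (1 / 24) * (Real.pi + 1) * |x| ^ 4 := by
  calc |Phi x| ≤ x ^ 4 / 24 := abs_Phi_le_pow_four x
    _ = 1 / 24 * 1 * |x| ^ 4 := by rw [pow_abs, abs_of_nonneg (by positivity)]; ring
    _ ≤ 1 / 24 * (π + 1) * |x| ^ 4 := by gcongr; linarith [pi_pos]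

/-- For `Φ(x) = (x/2)·sin x − 2·sin²(x/2)`, one has
`|Φ(x)| ≤ (1/24)(π + 1)|x|⁴` for all real `x` with `|x| ≤ π`. -/
theorem abs_Phi_le (x : ℝ) (hx : |x| ≤ Real.pi) :
    |x / 2 * Real.sin x - 2 * Real.sin (x / 2) ^ 2| ≤
      (1 / 24) * (Real.pi + 1) * |x| ^ 4 :=
  abs_Phi_le_general x
end

section
/- Let P(x) = ∏_{j=1}^m (x − x_j)^{α_j} be a monic degree-n real polynomial with distinct real roots x_j of multiplicities α_j. Let 0 < q < 1, c > 0, d = min_{i≠j}|x_i − x_j|, d − 2c > 0, and c²(n − α_i) < (α_i d − 2nc)(d − 2c) for all i. If the initial approximations satisfy |x_i^[0] − x_i| ≤ cq for all i, then the sequences defined by the iteration x_i^[k+1] = x_i^[k] − α_i(P(x_i^[k])/P'(x_i^[k]))·[1 + (P(x_i^[k])/P'(x_i^[k]))·(Q_i^[k]'(x_i^[k])/Q_i^[k](x_i^[k]))], with Q_i^[k](x) = ∏_{j≠i}(x − x_j^[k])^{α_j}, satisfy |x_i^[k] − x_i| ≤ c·q^{3^k} for all k ≥ 0 and all i. -/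
/-!
Write `e = Yᵢ - xᵢ` for the current error, `σ = ∑_{j ≠ i} αⱼ/(Yᵢ - xⱼ)` and
`s = ∑_{j ≠ i} αⱼ/(Yᵢ - Yⱼ)`. Then `P/P' = e/(αᵢ + eσ)` and `Qᵢ'/Qᵢ = s`, so one step maps `e` to
`e²(αᵢ(σ - s) + eσ²)/(αᵢ + eσ)²`. If every current error is at most `ρ ≤ c`, the separation gives
`|σ| ≤ β/(d - c)`, `|σ - s| ≤ βρ/((d - c)(d - 2c))` with `β = n - αᵢ`, hence
`|αᵢ + eσ| ≥ (αᵢd - cn)/(d - c)`, and the hypothesis on `c` is what makes the new error at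
most `ρ³/c²`. For `ρ = c q^(3^k)` this is `c q^(3^(k+1))`.
-/

open Finset

section LogDeriv

variable {𝕜 ι : Type*} [NontriviallyNormedField 𝕜]

theorem logDeriv_prod_sub_pow (s : Finset ι) (y : ι → 𝕜) (α : ι → ℕ) {t : 𝕜}
    (ht : ∀ j ∈ s, t ≠ y j) :
    logDeriv (fun u => ∏ j ∈ s, (u - y j) ^ α j) t = ∑ j ∈ s, (α j : 𝕜) / (t - y j) := by
  rw [logDeriv_prod (f := fun j u => (u - y j) ^ α j)
    (fun j hj => pow_ne_zero _ (sub_ne_zero.mpr (ht j hj))) (fun j _ => by fun_prop)]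
  refine sum_congr rfl fun j _ => ?_
  rw [logDeriv_fun_pow (by fun_prop), logDeriv_apply, deriv_sub_const, deriv_id'', mul_one_div]

theorem prod_sub_pow_div_deriv [Fintype ι] [DecidableEq ι] (y : ι → 𝕜) (α : ι → ℕ) {i : ι}
    (hα : α i ≠ 0) {t : 𝕜} (ht : ∀ j ∈ univ.erase i, t ≠ y j) :
    (∏ j, (t - y j) ^ α j) / deriv (fun u => ∏ j, (u - y j) ^ α j) t =
      (t - y i) / (α i + (t - y i) * ∑ j ∈ univ.erase i, (α j : 𝕜) / (t - y j)) := by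
  by_cases he : t - y i = 0
  · have hP : ∏ j, (t - y j) ^ α j = 0 := prod_eq_zero (mem_univ i) (by rw [he, zero_pow hα])
    rw [hP, he, zero_div, zero_div]
  have hσ : ∑ j, (α j : 𝕜) / (t - y j) =
      (α i + (t - y i) * ∑ j ∈ univ.erase i, (α j : 𝕜) / (t - y j)) / (t - y i) := by
    rw [← add_sum_erase _ _ (mem_univ i)]
    field_simp
  have ht_univ : ∀ j ∈ univ, t ≠ y j := fun j _ => by
    by_cases hj : j = i
    · exact hj ▸ sub_ne_zero.mp he
    · exact ht j (mem_erase.mpr ⟨hj, mem_univ j⟩)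
  rw [← inv_div, ← logDeriv_apply, logDeriv_prod_sub_pow _ _ _ ht_univ, hσ, inv_div]

end LogDeriv

theorem chebyshev_error_eq {K : Type*} [Field K] {a e σ s : K} (hD : a + e * σ ≠ 0) :
    e - a * (e / (a + e * σ)) * (1 + e / (a + e * σ) * s) =
      e ^ 2 * (a * (σ - s) + e * σ ^ 2) / (a + e * σ) ^ 2 := by
  field_simp
  ring

theorem abs_sum_le_sum_mul {ι : Type*} {s : Finset ι} {f w : ι → ℝ} {B : ℝ}
    (h : ∀ j ∈ s, |f j| ≤ w j * B) : |∑ j ∈ s, f j| ≤ (∑ j ∈ s, w j) * B := by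
  rw [sum_mul]
  exact (abs_sum_le_sum_abs f s).trans (sum_le_sum h)

theorem abs_div_sub_div_le {w t u v δ δ' ρ : ℝ} (hw : 0 ≤ w) (hδ : 0 < δ) (hδ' : 0 < δ')
    (hu : δ ≤ |t - u|) (hv : δ' ≤ |t - v|) (huv : |u - v| ≤ ρ) :
    |w / (t - u) - w / (t - v)| ≤ w * (ρ / (δ * δ')) := by
  have hρ : 0 ≤ ρ := (abs_nonneg _).trans huv
  have htu : t - u ≠ 0 := abs_pos.mp (hδ.trans_le hu)
  have htv : t - v ≠ 0 := abs_pos.mp (hδ'.trans_le hv)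
  have : w / (t - u) - w / (t - v) = w * ((u - v) / ((t - u) * (t - v))) := by
    field_simp
    ring
  rw [this, abs_mul, abs_of_nonneg hw, abs_div, abs_mul]
  gcongr

theorem abs_sq_mul_div_sq_le {c e N D ρ K L : ℝ} (hc : 0 < c) (he : |e| ≤ ρ) (hN : |N| ≤ ρ * K)
    (hL : 0 < L) (hD : L ≤ |D|) (hKL : c ^ 2 * K ≤ L ^ 2) :
    |e ^ 2 * N / D ^ 2| ≤ ρ ^ 3 / c ^ 2 := by
  have hρ : 0 ≤ ρ := (abs_nonneg e).trans he
  have hρK : 0 ≤ ρ * K := (abs_nonneg N).trans hN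
  rw [abs_div, abs_mul, abs_pow, abs_pow]
  calc |e| ^ 2 * |N| / |D| ^ 2 ≤ ρ ^ 2 * (ρ * K) / L ^ 2 := by gcongr
    _ = ρ ^ 3 * K / L ^ 2 := by ring
    _ ≤ ρ ^ 3 / c ^ 2 := by
        rw [div_le_div_iff₀ (by positivity) (by positivity)]
        nlinarith [mul_le_mul_of_nonneg_left hKL (pow_nonneg hρ 3)]

section Real

variable {a β c d : ℝ}

theorem chebyshev_margin_pos (hd : 0 < d - 2 * c) (hβ : 0 ≤ β)
    (hcond : c ^ 2 * β < (a * d - 2 * (a + β) * c) * (d - 2 * c)) :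
    0 < a * d - 2 * (a + β) * c :=
  pos_of_mul_pos_left ((mul_nonneg (sq_nonneg c) hβ).trans_lt hcond) hd.le

theorem pos_of_chebyshev_condition (hc : 0 < c) (hd : 0 < d - 2 * c) (hβ : 0 ≤ β)
    (hcond : c ^ 2 * β < (a * d - 2 * (a + β) * c) * (d - 2 * c)) : 0 < a := by
  have hA := chebyshev_margin_pos hd hβ hcond
  have : 0 < a * (d - 2 * c) := by nlinarith
  exact pos_of_mul_pos_left this hd.le

-- `L = (ad - c(a + β))/(d - c)` bounds the denominator `|a + eσ|` from below and `ρK`, with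
-- `K = aβ/((d - c)(d - 2c)) + (β/(d - c))²`, bounds the numerator `|a(σ - s) + eσ²|`.
theorem chebyshev_key_ineq (hc : 0 < c) (hd : 0 < d - 2 * c) (hβ : 0 ≤ β)
    (hcond : c ^ 2 * β < (a * d - 2 * (a + β) * c) * (d - 2 * c)) :
    c ^ 2 * (a * β / ((d - c) * (d - 2 * c)) + (β / (d - c)) ^ 2) ≤
      ((a * d - c * (a + β)) / (d - c)) ^ 2 := by
  have ha := pos_of_chebyshev_condition hc hd hβ hcond
  have h1 : β * c * (c + 2 * (d - 2 * c)) < a * (d - 2 * c) ^ 2 := by nlinarith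
  have h2 : β * c * (2 * (d - 2 * c) + c) < a * (d - c) * (d - 2 * c) := by
    nlinarith [mul_nonneg (mul_nonneg ha.le hd.le) hc.le]
  have hpoly : c ^ 2 * β * (a * (d - c) + β * (d - 2 * c)) ≤
      (d - 2 * c) * (a * d - c * (a + β)) ^ 2 := by
    nlinarith [mul_lt_mul_of_pos_left h2 (show (0:ℝ) < a * (d - c) by nlinarith)]
  have hdc : 0 < d - c := by linarith
  rw [div_pow (a * d - c * (a + β)), le_div_iff₀ (by positivity)]
  calc c ^ 2 * (a * β / ((d - c) * (d - 2 * c)) + (β / (d - c)) ^ 2) * (d - c) ^ 2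
      = c ^ 2 * β * (a * (d - c) + β * (d - 2 * c)) / (d - 2 * c) := by
        have : d - c * 2 ≠ 0 := by rw [mul_comm]; exact hd.ne'
        field_simp
    _ ≤ (a * d - c * (a + β)) ^ 2 := by
        rw [div_le_iff₀ hd]
        linarith

theorem div_le_abs_add_mul {e σ : ℝ} (ha : 0 ≤ a) (hdc : 0 < d - c) (he : |e| ≤ c)
    (hσ : |σ| ≤ β / (d - c)) : (a * d - c * (a + β)) / (d - c) ≤ |a + e * σ| := by
  have heσ : |e * σ| ≤ c * (β / (d - c)) := by
    rw [abs_mul]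
    exact mul_le_mul he hσ (abs_nonneg σ) ((abs_nonneg e).trans he)
  calc (a * d - c * (a + β)) / (d - c) = a - c * (β / (d - c)) := by
        field_simp
        ring
    _ ≤ |a| - |e * σ| := by rw [abs_of_nonneg ha]; linarith
    _ ≤ |a + e * σ| := by simpa using abs_sub_abs_le_abs_sub a (-(e * σ))

theorem abs_chebyshev_error_le {ρ e σ s : ℝ} (hc : 0 < c) (hd : 0 < d - 2 * c) (hβ : 0 ≤ β)
    (hcond : c ^ 2 * β < (a * d - 2 * (a + β) * c) * (d - 2 * c)) (hρc : ρ ≤ c)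
    (he : |e| ≤ ρ) (hσ : |σ| ≤ β / (d - c))
    (hσs : |σ - s| ≤ β * ρ / ((d - c) * (d - 2 * c))) :
    |e - a * (e / (a + e * σ)) * (1 + e / (a + e * σ) * s)| ≤ ρ ^ 3 / c ^ 2 := by
  have ha := pos_of_chebyshev_condition hc hd hβ hcond
  have hdc : 0 < d - c := by linarith
  have hρ : 0 ≤ ρ := (abs_nonneg e).trans he
  have hL : 0 < (a * d - c * (a + β)) / (d - c) := by
    refine div_pos ?_ hdc
    linarith [chebyshev_margin_pos hd hβ hcond, mul_pos hc (add_pos_of_pos_of_nonneg ha hβ)]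
  have hD := div_le_abs_add_mul ha.le hdc (he.trans hρc) hσ
  have hN : |a * (σ - s) + e * σ ^ 2| ≤
      ρ * (a * β / ((d - c) * (d - 2 * c)) + (β / (d - c)) ^ 2) :=
    calc |a * (σ - s) + e * σ ^ 2| ≤ a * |σ - s| + |e| * |σ| ^ 2 := by
          refine (abs_add_le _ _).trans_eq ?_
          rw [abs_mul, abs_mul, abs_pow, abs_of_pos ha]
      _ ≤ a * (β * ρ / ((d - c) * (d - 2 * c))) + ρ * (β / (d - c)) ^ 2 := by gcongr
      _ = ρ * (a * β / ((d - c) * (d - 2 * c)) + (β / (d - c)) ^ 2) := by ring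
  rw [chebyshev_error_eq (abs_pos.mp (hL.trans_le hD))]
  exact abs_sq_mul_div_sq_le hc he hN hL hD (chebyshev_key_ineq hc hd hβ hcond)

end Real

noncomputable def chebyshevStep {ι : Type*} [Fintype ι] [DecidableEq ι] (α : ι → ℕ)
    (P : ℝ → ℝ) (Y : ι → ℝ) (i : ι) : ℝ :=
  Y i - α i * (P (Y i) / deriv P (Y i)) *
    (1 + P (Y i) / deriv P (Y i) * logDeriv (fun t => ∏ j ∈ univ.erase i, (t - Y j) ^ α j) (Y i))

theorem chebyshevStep_prod_sub_pow {ι : Type*} [Fintype ι] [DecidableEq ι] {x Y : ι → ℝ}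
    {α : ι → ℕ} {i : ι} (hα : α i ≠ 0) (hx : ∀ j ∈ univ.erase i, Y i ≠ x j)
    (hY : ∀ j ∈ univ.erase i, Y i ≠ Y j) :
    let e := Y i - x i
    let D := α i + e * ∑ j ∈ univ.erase i, (α j : ℝ) / (Y i - x j)
    chebyshevStep α (fun t => ∏ j, (t - x j) ^ α j) Y i =
      Y i - α i * (e / D) * (1 + e / D * ∑ j ∈ univ.erase i, (α j : ℝ) / (Y i - Y j)) := by
  unfold chebyshevStep
  beta_reduce
  rw [prod_sub_pow_div_deriv x α hα hx, logDeriv_prod_sub_pow _ _ _ hY]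

theorem abs_chebyshevStep_sub_le {ι : Type*} [Fintype ι] [DecidableEq ι] {x Y : ι → ℝ}
    {α : ι → ℕ} {c d ρ : ℝ} {i : ι} (hc : 0 < c) (hd : 0 < d - 2 * c)
    (hsep : ∀ j ≠ i, d ≤ |x i - x j|)
    (hcond : c ^ 2 * ∑ j ∈ univ.erase i, (α j : ℝ) <
      (α i * d - 2 * (α i + ∑ j ∈ univ.erase i, (α j : ℝ)) * c) * (d - 2 * c))
    (hρc : ρ ≤ c) (hY : ∀ j, |Y j - x j| ≤ ρ) :
    |chebyshevStep α (fun t => ∏ j, (t - x j) ^ α j) Y i - x i| ≤ ρ ^ 3 / c ^ 2 := by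
  set β := ∑ j ∈ univ.erase i, (α j : ℝ)
  have hβ : 0 ≤ β := sum_nonneg fun j _ => Nat.cast_nonneg _
  have hdc : 0 < d - c := by linarith
  have hx : ∀ j ∈ univ.erase i, d - c ≤ |Y i - x j| := fun j hj => by
    linarith [hsep j (ne_of_mem_erase hj), abs_sub_le (x i) (Y i) (x j),
      abs_sub_comm (x i) (Y i), hY i]
  have hxY : ∀ j ∈ univ.erase i, d - 2 * c ≤ |Y i - Y j| := fun j hj => by
    linarith [hx j hj, abs_sub_le (Y i) (Y j) (x j), hY j]
  have hσ : |∑ j ∈ univ.erase i, (α j : ℝ) / (Y i - x j)| ≤ β / (d - c) := by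
    rw [div_eq_mul_one_div]
    refine abs_sum_le_sum_mul fun j hj => ?_
    rw [abs_div, Nat.abs_cast, ← div_eq_mul_one_div]
    gcongr
    exact hx j hj
  have hσs : |∑ j ∈ univ.erase i, (α j : ℝ) / (Y i - x j) -
      ∑ j ∈ univ.erase i, (α j : ℝ) / (Y i - Y j)| ≤ β * ρ / ((d - c) * (d - 2 * c)) := by
    rw [← sum_sub_distrib, mul_div_assoc]
    exact abs_sum_le_sum_mul fun j hj => abs_div_sub_div_le (Nat.cast_nonneg _) hdc hd
      (hx j hj) (hxY j hj) (by rw [abs_sub_comm]; exact hY j)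
  have hα : α i ≠ 0 := by exact_mod_cast (pos_of_chebyshev_condition hc hd hβ hcond).ne'
  rw [chebyshevStep_prod_sub_pow hα
    (fun j hj => sub_ne_zero.mp (abs_pos.mp (hdc.trans_le (hx j hj))))
    (fun j hj => sub_ne_zero.mp (abs_pos.mp (hd.trans_le (hxY j hj)))), sub_right_comm]
  exact abs_chebyshev_error_le hc hd hβ hcond hρc (hY i) hσ hσs

theorem chebyshev_cubic_convergence_general (m n : ℕ) (x : Fin m → ℝ) (α : Fin m → ℕ)
    (c d q : ℝ)
    (hn : (n : ℝ) = ∑ j : Fin m, (α j : ℝ))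
    (hq0 : 0 < q) (hq1 : q < 1) (hc : 0 < c)
    (hsep : ∀ i j, i ≠ j → d ≤ |x i - x j|)
    (hd : 0 < d - 2 * c)
    (hcond : ∀ i, c ^ 2 * ((n : ℝ) - (α i : ℝ)) <
      ((α i : ℝ) * d - 2 * (n : ℝ) * c) * (d - 2 * c))
    (P : ℝ → ℝ) (hP : P = fun t => ∏ j : Fin m, (t - x j) ^ (α j))
    (X : ℕ → Fin m → ℝ)
    (hX0 : ∀ i, |X 0 i - x i| ≤ c * q)
    (hXrec : ∀ k i,
      X (k + 1) i = X k i - (α i : ℝ) * (P (X k i) / deriv P (X k i)) *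
        (1 + (P (X k i) / deriv P (X k i)) *
          (deriv (fun t => ∏ j ∈ Finset.univ.erase i, (t - X k j) ^ (α j)) (X k i) /
            ∏ j ∈ Finset.univ.erase i, (X k i - X k j) ^ (α j)))) :
    ∀ k i, |X k i - x i| ≤ c * q ^ (3 ^ k) := by
  subst hP
  have hcond_erase : ∀ i, c ^ 2 * ∑ j ∈ univ.erase i, (α j : ℝ) <
      (α i * d - 2 * (α i + ∑ j ∈ univ.erase i, (α j : ℝ)) * c) * (d - 2 * c) := fun i => by
    have hni : (n : ℝ) = α i + ∑ j ∈ univ.erase i, (α j : ℝ) := by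
      rw [hn, ← add_sum_erase _ _ (mem_univ i)]
    simpa only [hni, add_sub_cancel_left] using hcond i
  intro k
  induction k with
  | zero => simpa using hX0
  | succ k ih =>
    intro i
    have hρc : c * q ^ 3 ^ k ≤ c := mul_le_of_le_one_right hc.le (pow_le_one₀ hq0.le hq1.le)
    calc |X (k + 1) i - x i| = |chebyshevStep α _ (X k) i - x i| := by rw [hXrec]; rfl
      _ ≤ (c * q ^ 3 ^ k) ^ 3 / c ^ 2 :=
        abs_chebyshevStep_sub_le hc hd (fun j hj => hsep i j hj.symm) (hcond_erase i) hρc ih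
      _ = c * q ^ 3 ^ (k + 1) := by
        rw [pow_succ 3 k, pow_mul]
        field_simp

/-- Theorem 1 of the paper: cubic convergence of the generalized Chebyshev method.
If `0 < q < 1`, `c > 0`, `d` is a lower bound on the pairwise distances of the
roots with `d − 2c > 0` and `c²(n − α i) < (α i d − 2nc)(d − 2c)` for all `i`,
and the initial approximations satisfy `|X 0 i − x i| ≤ c q`, then the iterates of
`x_i^[k+1] = x_i^[k] − α i (P/P')(x_i^[k])·[1 + (P/P')(x_i^[k])·(Qᵢ'/Qᵢ)(x_i^[k])]`
satisfy `|X k i − x i| ≤ c q^(3^k)` for all `k` and `i`. -/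
theorem chebyshev_cubic_convergence (m n : ℕ) (x : Fin m → ℝ) (α : Fin m → ℕ)
    (c d q : ℝ)
    (hdist : Function.Injective x) (hα : ∀ j, 0 < α j)
    (hn : (n : ℝ) = ∑ j : Fin m, (α j : ℝ))
    (hq0 : 0 < q) (hq1 : q < 1) (hc : 0 < c)
    (hsep : ∀ i j, i ≠ j → d ≤ |x i - x j|)
    (hd : 0 < d - 2 * c)
    (hcond : ∀ i, c ^ 2 * ((n : ℝ) - (α i : ℝ)) <
      ((α i : ℝ) * d - 2 * (n : ℝ) * c) * (d - 2 * c))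
    (P : ℝ → ℝ) (hP : P = fun t => ∏ j : Fin m, (t - x j) ^ (α j))
    (X : ℕ → Fin m → ℝ)
    (hX0 : ∀ i, |X 0 i - x i| ≤ c * q)
    (hXrec : ∀ k i,
      X (k + 1) i = X k i - (α i : ℝ) * (P (X k i) / deriv P (X k i)) *
        (1 + (P (X k i) / deriv P (X k i)) *
          (deriv (fun t => ∏ j ∈ Finset.univ.erase i, (t - X k j) ^ (α j)) (X k i) /
            ∏ j ∈ Finset.univ.erase i, (X k i - X k j) ^ (α j)))) :
    ∀ k i, |X k i - x i| ≤ c * q ^ (3 ^ k) :=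
  chebyshev_cubic_convergence_general m n x α c d q hn hq0 hq1 hc hsep hd hcond P hP X hX0 hXrec
end

section
/- The function G(x) = x·cosh²(x/2) − sinh(x) satisfies G(0) = G'(0) = G''(0) = 0, and for |x| ≤ c one has |G(x)| ≤ (1/12)(c·sinh(c) + cosh(c))·|x|³. -/
open Real

private lemma G_hasDeriv (x : ℝ) :
    HasDerivAt (fun x => x * Real.cosh (x / 2) ^ 2 - Real.sinh x)
      ((1 - Real.cosh x) / 2 + x * Real.sinh x / 2) x := by
  have h1 : HasDerivAt (fun x : ℝ => x / 2) (1 / 2) x := by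
    simpa using (hasDerivAt_id x).div_const 2
  have h2 : HasDerivAt (fun x : ℝ => Real.cosh (x / 2)) (Real.sinh (x / 2) * (1 / 2)) x :=
    by have := (Real.hasDerivAt_cosh (x / 2)).comp x h1; exact this
  have h3 : HasDerivAt (fun x : ℝ => Real.cosh (x / 2) ^ 2)
      (2 * Real.cosh (x / 2) * (Real.sinh (x / 2) * (1 / 2))) x := by
    simpa using h2.fun_pow 2
  have h4 := ((hasDerivAt_id x).mul h3).fun_sub (Real.hasDerivAt_sinh x)
  refine h4.congr_deriv (Eq.symm ?_)
  have hc := Real.cosh_two_mul (x / 2)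
  have hs := Real.sinh_two_mul (x / 2)
  have hd := Real.cosh_sq_sub_sinh_sq (x / 2)
  have hx2 : 2 * (x / 2) = x := by ring
  rw [hx2] at hc hs
  simp only [id_eq]
  linear_combination (x / 2) * hs + (1 / 2) * hc - (1 / 2) * hd

private lemma G1_hasDeriv (x : ℝ) :
    HasDerivAt (fun x => (1 - Real.cosh x) / 2 + x * Real.sinh x / 2)
      (x * Real.cosh x / 2) x := by
  have h1 : HasDerivAt (fun x : ℝ => (1 - Real.cosh x) / 2) (-Real.sinh x / 2) x := by
    simpa using (((hasDerivAt_const x (1:ℝ)).sub (Real.hasDerivAt_cosh x)).div_const 2)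
  have h2 : HasDerivAt (fun x : ℝ => x * Real.sinh x / 2)
      ((1 * Real.sinh x + x * Real.cosh x) / 2) x :=
    ((hasDerivAt_id x).mul (Real.hasDerivAt_sinh x)).div_const 2
  refine (h1.fun_add h2).congr_deriv ?_
  ring

/-- The hyperbolic auxiliary function `G(x) = x·cosh²(x/2) − sinh x` satisfies
`G(0) = G'(0) = G''(0) = 0`, and for `|x| ≤ c`,
`|G(x)| ≤ (1/12)(c·sinh c + cosh c)·|x|³`. -/
theorem G_vanishing_and_bound
    (G : ℝ → ℝ) (hG : G = fun x => x * Real.cosh (x / 2) ^ 2 - Real.sinh x) :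
    (G 0 = 0 ∧ deriv G 0 = 0 ∧ deriv (deriv G) 0 = 0) ∧
    ∀ c x : ℝ, |x| ≤ c →
      |G x| ≤ (1 / 12) * (c * Real.sinh c + Real.cosh c) * |x| ^ 3 := by
  subst hG
  set G : ℝ → ℝ := fun x => x * Real.cosh (x / 2) ^ 2 - Real.sinh x with hGdef
  set G1 : ℝ → ℝ := fun x => (1 - Real.cosh x) / 2 + x * Real.sinh x / 2 with hG1def
  have hdG : deriv G = G1 := funext fun x => (G_hasDeriv x).deriv
  have hdG1 : deriv G1 = fun x => x * Real.cosh x / 2 := funext fun x => (G1_hasDeriv x).deriv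
  constructor
  · refine ⟨by simp [hGdef], ?_, ?_⟩
    · rw [hdG]; simp [hG1def]
    · rw [hdG, hdG1]; simp
  intro c x hx
  -- main bound
  have hc0 : 0 ≤ c := le_trans (abs_nonneg x) hx
  -- key: for 0 ≤ y ≤ c, 0 ≤ G y ≤ cosh c / 12 * y ^ 3
  have key : ∀ y : ℝ, 0 ≤ y → y ≤ c → 0 ≤ G y ∧ G y ≤ Real.cosh c / 12 * y ^ 3 := by
    intro y hy0 hyc
    have hmem : ∀ t ∈ Set.Icc (0:ℝ) c, True := fun _ _ => trivial
    -- G1 is nonneg on [0,c] : G1 0 = 0 and G1 monotone there since deriv = t*cosh t/2 ≥ 0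
    have hG1mono : MonotoneOn G1 (Set.Icc 0 c) := by
      apply monotoneOn_of_hasDerivWithinAt_nonneg (convex_Icc 0 c)
        (fun t _ => (G1_hasDeriv t).continuousAt.continuousWithinAt)
        (fun t _ => (G1_hasDeriv t).hasDerivWithinAt)
      intro t ht
      rw [interior_Icc] at ht
      have h1 : 0 ≤ t := le_of_lt ht.1
      positivity
    have hG1nonneg : ∀ t ∈ Set.Icc (0:ℝ) c, 0 ≤ G1 t := by
      intro t ht
      have h0 : G1 0 = 0 := by simp [hG1def]
      have := hG1mono (Set.left_mem_Icc.2 hc0) ht ht.1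
      linarith
    -- A t = cosh c * t^2/4 - G1 t is monotone on [0,c], A 0 = 0
    have hAmono : MonotoneOn (fun t => Real.cosh c * t ^ 2 / 4 - G1 t) (Set.Icc 0 c) := by
      apply monotoneOn_of_hasDerivWithinAt_nonneg (convex_Icc 0 c)
        (f' := fun t => Real.cosh c * (2 * t) / 4 - t * Real.cosh t / 2)
      · intro t _
        exact (((((hasDerivAt_id t).pow 2).const_mul (Real.cosh c)).div_const 4).sub
          (G1_hasDeriv t)).continuousAt.continuousWithinAt
      · intro t _
        have := ((((hasDerivAt_id t).pow 2).const_mul (Real.cosh c)).div_const 4).fun_sub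
          (G1_hasDeriv t)
        simpa [mul_comm, mul_assoc, mul_left_comm] using this.hasDerivWithinAt
      · intro t ht
        rw [interior_Icc] at ht
        have h1 : 0 ≤ t := le_of_lt ht.1
        have h2 : Real.cosh t ≤ Real.cosh c := by
          rw [Real.cosh_le_cosh, abs_of_nonneg h1, abs_of_nonneg hc0]
          exact le_of_lt ht.2
        nlinarith
    have hAnonneg : ∀ t ∈ Set.Icc (0:ℝ) c, G1 t ≤ Real.cosh c * t ^ 2 / 4 := by
      intro t ht
      have h0 : (fun t => Real.cosh c * t ^ 2 / 4 - G1 t) 0 = 0 := by simp [hG1def]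
      have := hAmono (Set.left_mem_Icc.2 hc0) ht ht.1
      simp only [h0] at this ⊢
      linarith [this]
    -- now G: G 0 = 0, deriv G = G1 ≥ 0 ⇒ G ≥ 0 on [0,c]
    have hymem : y ∈ Set.Icc (0:ℝ) c := ⟨hy0, hyc⟩
    have hGmono : MonotoneOn G (Set.Icc 0 c) := by
      apply monotoneOn_of_hasDerivWithinAt_nonneg (convex_Icc 0 c)
        (fun t _ => (G_hasDeriv t).continuousAt.continuousWithinAt)
        (fun t _ => (G_hasDeriv t).hasDerivWithinAt)
      intro t ht
      exact hG1nonneg t (interior_subset ht)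
    have hG0 : G 0 = 0 := by simp [hGdef]
    have hGnonneg : 0 ≤ G y := by
      have := hGmono (Set.left_mem_Icc.2 hc0) hymem hy0
      rw [hG0] at this; exact this
    -- B t = cosh c * t^3/12 - G t monotone on [0,c]
    have hBmono : MonotoneOn (fun t => Real.cosh c * t ^ 3 / 12 - G t) (Set.Icc 0 c) := by
      apply monotoneOn_of_hasDerivWithinAt_nonneg (convex_Icc 0 c)
        (f' := fun t => Real.cosh c * (3 * t ^ 2) / 12 - G1 t)
      · intro t _
        exact (((((hasDerivAt_id t).pow 3).const_mul (Real.cosh c)).div_const 12).sub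
          (G_hasDeriv t)).continuousAt.continuousWithinAt
      · intro t _
        have := ((((hasDerivAt_id t).pow 3).const_mul (Real.cosh c)).div_const 12).fun_sub
          (G_hasDeriv t)
        simpa [mul_comm, mul_assoc, mul_left_comm] using this.hasDerivWithinAt
      · intro t ht
        have ht' := interior_subset ht
        have := hAnonneg t ht'
        nlinarith
    have hB0 : (fun t => Real.cosh c * t ^ 3 / 12 - G t) 0 = 0 := by simp [hGdef]
    have := hBmono (Set.left_mem_Icc.2 hc0) hymem hy0
    rw [hB0] at this
    exact ⟨hGnonneg, by linarith⟩
  -- oddness of G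
  have hodd : ∀ y : ℝ, G (-y) = -G y := by
    intro y
    simp only [hGdef]
    rw [show -y / 2 = -(y / 2) by ring, Real.cosh_neg, Real.sinh_neg]
    ring
  have hmain : |G x| ≤ Real.cosh c / 12 * |x| ^ 3 := by
    rcases le_or_gt 0 x with hx0 | hx0
    · have := key x hx0 (by rwa [abs_of_nonneg hx0] at hx)
      rw [abs_of_nonneg this.1, abs_of_nonneg hx0]
      exact this.2
    · have hxc : -x ≤ c := by rwa [abs_of_neg hx0] at hx
      have := key (-x) (by linarith) hxc
      rw [hodd x] at this
      rw [abs_of_nonpos (by linarith [this.1]), abs_of_neg hx0]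
      linarith [this.2]
  have hsc : 0 ≤ c * Real.sinh c := mul_nonneg hc0 (by rwa [← Real.sinh_zero, Real.sinh_le_sinh])
  have habs : 0 ≤ |x| ^ 3 := by positivity
  nlinarith [hmain, mul_nonneg hsc habs]
end
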